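/- arXiv:1101.2754 — 9 statements merged into one kernel-verified Lean document; each statement's English description precedes it below -/
import Mathlib

section
/- Let G be a topological group, U an open neighborhood of the identity, and V_{-1} := U. Suppose (V_k)_{k∈ℕ} are neighborhoods of the identity such that V_k ∪ V_k·V_k ∪ V_k·V_k·V_k ⊆ V_{k-1} for all k ≥ 0. Then for any finite set of distinct indices i_0, …, i_n with minimum i_l, the product V_{i_0}·V_{i_1}···V_{i_n} is contained in V_{i_l - 1}. -/
open Filter Topology Pointwise

/-- `u` converges to the identity in the group topology `t`. -/
def TendstoOne {G : Type*} [Group G] (t : GroupTopology G) (u : ℕ → G) : Prop :=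
  Filter.Tendsto u Filter.atTop (@nhds G t.toTopologicalSpace 1)

/-- The group topology `t` is Hausdorff. -/
def IsHausdorffGT {G : Type*} [Group G] (t : GroupTopology G) : Prop :=
  @T2Space G t.toTopologicalSpace

/-- `S` is a `T_s`-set of sequences: some Hausdorff group topology makes every
sequence of `S` converge to the identity. -/
def IsTsSet {G : Type*} [Group G] (S : Set (ℕ → G)) : Prop :=
  ∃ t : GroupTopology G, IsHausdorffGT t ∧ ∀ u ∈ S, TendstoOne t u

/-- `τ` is the finest Hausdorff group topology on `G` in which every sequence of `S`
converges to the identity (recall that in Mathlib's order on topologies, finer = smaller). -/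
def IsTauS {G : Type*} [Group G] (S : Set (ℕ → G)) (τ : GroupTopology G) : Prop :=
  IsHausdorffGT τ ∧ (∀ u ∈ S, TendstoOne τ u) ∧
    ∀ t : GroupTopology G, IsHausdorffGT t → (∀ u ∈ S, TendstoOne t u) → τ ≤ t

/-- The given topological-group structure on `G`, as a term of `GroupTopology G`. -/
def ambientGT (G : Type*) [Group G] [τ : TopologicalSpace G] [h : IsTopologicalGroup G] :
    GroupTopology G := ⟨τ, h⟩

/-- The set of all sequences converging to the identity in a group topology. -/
def SeqConvOne {G : Type*} [Group G] (t : GroupTopology G) : Set (ℕ → G) :=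
  {u | TendstoOne t u}

/-- `(G, τ)` is an `s`-group: its topology is the finest Hausdorff group topology in which
every member of some `T_s`-set of sequences converges to the identity. -/
def IsSGroup (G : Type*) [Group G] [TopologicalSpace G] [IsTopologicalGroup G] [T2Space G] :
    Prop :=
  ∃ S : Set (ℕ → G), IsTauS S (ambientGT G)

/-!
Split the index list at its minimum `m` as `A ++ m :: B`. All indices in `A` and `B` exceed `m`,
so by strong induction on the length each of the products over `A` and `B` is either empty or lies
in `V (m' - 1) ⊆ V m` for its own minimum `m' > m`. Hence the whole product lies in
`(1 ∪ V m) * V m * (1 ∪ V m) ⊆ V m ∪ V m * V m ∪ V m * V m * V m`, which the hypothesis puts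
into `V (m - 1)`.
-/

theorem insert_one_mul_mul_insert_one_subset {M : Type*} [Monoid M] (S : Set M) :
    insert 1 S * S * insert 1 S ⊆ S ∪ S * S ∪ S * S * S := by
  rintro _ ⟨_, ⟨a, ha, b, hb, rfl⟩, c, hc, rfl⟩
  rcases ha with rfl | ha <;> rcases hc with rfl | hc
  · simpa using Or.inl (Or.inl hb)
  · simpa using Or.inl (Or.inr (Set.mul_mem_mul hb hc))
  · simpa using Or.inl (Or.inr (Set.mul_mem_mul ha hb))
  · exact Or.inr (Set.mul_mem_mul (Set.mul_mem_mul ha hb) hc)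

theorem List.exists_eq_append_cons_of_forall_le {α : Type*} [LinearOrder α] {L : List α}
    (hL : L.Nodup) {m : α} (hm : m ∈ L) (hmin : ∀ j ∈ L, m ≤ j) :
    ∃ A B, L = A ++ m :: B ∧ A.Nodup ∧ B.Nodup ∧ (∀ j ∈ A, m < j) ∧ ∀ j ∈ B, m < j := by
  obtain ⟨A, B, rfl⟩ := List.append_of_mem hm
  obtain ⟨hmAB, hAB⟩ := List.nodup_cons.mp (List.nodup_middle.mp hL)
  refine ⟨A, B, rfl, hAB.sublist (List.sublist_append_left A B),
    hAB.sublist (List.sublist_append_right A B), fun j hj => ?_, fun j hj => ?_⟩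
  · exact (hmin j (by simp [hj])).lt_of_ne (by rintro rfl; exact hmAB (by simp [hj]))
  · exact (hmin j (by simp [hj])).lt_of_ne (by rintro rfl; exact hmAB (by simp [hj]))

section

variable {M : Type*} [Monoid M]

def IsCubeChain (U : Set M) (V : ℕ → Set M) : Prop :=
  ∀ k, V k ∪ V k * V k ∪ V k * V k * V k ⊆ if k = 0 then U else V (k - 1)

namespace IsCubeChain

variable {U : Set M} {V : ℕ → Set M}

theorem antitone (hV : IsCubeChain U V) : Antitone V :=
  antitone_nat_of_succ_le fun k x hx => by simpa using hV (k + 1) (Or.inl (Or.inl hx))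

theorem subset_of_lt (hV : IsCubeChain U V) {m m' : ℕ} (h : m < m') :
    (if m' = 0 then U else V (m' - 1)) ⊆ V m := by
  rw [if_neg (by omega)]
  exact hV.antitone (by omega)

theorem prod_append_cons_subset (hV : IsCubeChain U V) {A B : List ℕ} {m : ℕ}
    (hA : (A.map V).prod ⊆ insert 1 (V m)) (hB : (B.map V).prod ⊆ insert 1 (V m)) :
    ((A ++ m :: B).map V).prod ⊆ if m = 0 then U else V (m - 1) := by
  rw [List.map_append, List.map_cons, List.prod_append, List.prod_cons, ← mul_assoc]
  exact (Set.mul_subset_mul (Set.mul_subset_mul_right hA) hB).trans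
    ((insert_one_mul_mul_insert_one_subset (V m)).trans (hV m))

theorem list_prod_subset (hV : IsCubeChain U V) {L : List ℕ} (hL : L.Nodup) {m : ℕ}
    (hm : m ∈ L) (hmin : ∀ j ∈ L, m ≤ j) :
    (L.map V).prod ⊆ if m = 0 then U else V (m - 1) := by
  obtain ⟨A, B, rfl, hA, hB, hAm, hBm⟩ := List.exists_eq_append_cons_of_forall_le hL hm hmin
  have hshorter : ∀ C : List ℕ, C.length < (A ++ m :: B).length → C.Nodup →
      (∀ j ∈ C, m < j) → (C.map V).prod ⊆ insert 1 (V m) := by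
    intro C hlen hC hCm
    rcases eq_or_ne C [] with rfl | hne
    · simp
    · have hmin_mem := C.min_mem hne
      exact (hV.list_prod_subset hC hmin_mem fun j hj => C.min_le_of_mem hj).trans
        ((hV.subset_of_lt (hCm _ hmin_mem)).trans (Set.subset_insert _ _))
  exact hV.prod_append_cons_subset (hshorter A (by simp) hA hAm)
    (hshorter B (by simp; omega) hB hBm)
termination_by L.length

end IsCubeChain

end

theorem stmt1_general {G : Type*} [Group G] (U : Set G) (V : ℕ → Set G)
    (hchain : ∀ k : ℕ,
      V k ∪ V k * V k ∪ V k * V k * V k ⊆ if k = 0 then U else V (k - 1)) :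
    ∀ n : ℕ, ∀ i : Fin (n + 1) → ℕ, Function.Injective i →
      (List.ofFn fun j : Fin (n + 1) => V (i j)).prod ⊆
        (if Finset.univ.inf' Finset.univ_nonempty i = 0 then U
          else V (Finset.univ.inf' Finset.univ_nonempty i - 1)) := by
  intro n i hi
  obtain ⟨j₀, -, hj₀⟩ := Finset.exists_mem_eq_inf' Finset.univ_nonempty i
  rw [show (List.ofFn fun j => V (i j)) = (List.ofFn i).map V from (List.map_ofFn ..).symm]
  refine IsCubeChain.list_prod_subset hchain (List.nodup_ofFn.mpr hi) ?_ ?_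
  · exact List.mem_ofFn.mpr ⟨j₀, hj₀.symm⟩
  · rintro _ hj
    obtain ⟨j, rfl⟩ := List.mem_ofFn.mp hj
    exact Finset.inf'_le i (Finset.mem_univ j)

/-- with `V (-1) := U`, if `V k ∪ V k * V k ∪ V k * V k * V k ⊆ V (k-1)` for all
`k ≥ 0`, then for distinct indices `i 0, …, i n` with minimum `m`, the product
`V (i 0) * ⋯ * V (i n)` is contained in `V (m - 1)` (which is `U` when `m = 0`). -/
theorem stmt1 {G : Type*} [Group G] [TopologicalSpace G] [IsTopologicalGroup G]
    (U : Set G) (hU : IsOpen U) (h1 : (1 : G) ∈ U)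
    (V : ℕ → Set G) (hV1 : ∀ k, V k ∈ nhds (1 : G))
    (hchain : ∀ k : ℕ,
      V k ∪ V k * V k ∪ V k * V k * V k ⊆ if k = 0 then U else V (k - 1)) :
    ∀ n : ℕ, ∀ i : Fin (n + 1) → ℕ, Function.Injective i →
      (List.ofFn fun j : Fin (n + 1) => V (i j)).prod ⊆
        (if Finset.univ.inf' Finset.univ_nonempty i = 0 then U
          else V (Finset.univ.inf' Finset.univ_nonempty i - 1)) :=
  stmt1_general U V hchain
end

section
/- Let S be a nonempty family of sequences in a group G such that each sequence u ∈ S converges to the identity in some Hausdorff group topology on G (i.e., each u is a T-sequence, with finest such topology τ_u). Then there exists a Hausdorff group topology on G in which every sequence of S converges to the identity if and only if the infimum (in the lattice of group topologies on G) of the topologies τ_u over u ∈ S is Hausdorff; and in that case, this infimum is the finest Hausdorff group topology in which all sequences of S converge to the identity. -/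
open Filter Topology Pointwise

/-
The supremum `T = ⨆ u ∈ S, t u` (the infimum of the `τ_u` in the usual order) is coarser than
each `τ_u`, so every `u ∈ S` still converges to `1` in `T`. Conversely, if a Hausdorff group
topology `t'` makes all of `S` converge to `1`, then `τ_u ≤ t'` for each `u`, hence `T ≤ t'`;
so `T` is finer than `t'` and therefore Hausdorff as well.
-/

lemma TendstoOne.mono_left {G : Type*} [Group G] {t t' : GroupTopology G} {u : ℕ → G}
    (hu : TendstoOne t u) (h : t ≤ t') : TendstoOne t' u :=
  hu.mono_right (nhds_mono (GroupTopology.toTopologicalSpace_le.2 h))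

lemma IsHausdorffGT.of_le {G : Type*} [Group G] {t t' : GroupTopology G}
    (ht' : IsHausdorffGT t') (h : t ≤ t') : IsHausdorffGT t :=
  t2Space_antitone (GroupTopology.toTopologicalSpace_le.2 h) ht'

lemma IsTauS.le_of_tendstoOne_singleton {G : Type*} [Group G] {u : ℕ → G}
    {τ : GroupTopology G} (hτ : IsTauS {u} τ) {t' : GroupTopology G} (ht' : IsHausdorffGT t')
    (hu : TendstoOne t' u) : τ ≤ t' :=
  hτ.2.2 t' ht' fun _ hv => (Set.mem_singleton_iff.1 hv) ▸ hu

section BiSup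

variable {G : Type*} [Group G] {S : Set (ℕ → G)} {t : (ℕ → G) → GroupTopology G}

lemma tendstoOne_biSup (ht : ∀ u ∈ S, TendstoOne (t u) u) :
    ∀ u ∈ S, TendstoOne (⨆ u ∈ S, t u) u := fun u hu =>
  (ht u hu).mono_left (le_iSup₂ (f := fun u _ => t u) u hu)

lemma biSup_le_of_tendstoOne (ht : ∀ u ∈ S, IsTauS {u} (t u)) {t' : GroupTopology G}
    (ht' : IsHausdorffGT t') (hS : ∀ u ∈ S, TendstoOne t' u) : (⨆ u ∈ S, t u) ≤ t' :=
  iSup₂_le fun u hu => (ht u hu).le_of_tendstoOne_singleton ht' (hS u hu)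

lemma IsTsSet.isHausdorffGT_biSup (ht : ∀ u ∈ S, IsTauS {u} (t u)) (hS : IsTsSet S) :
    IsHausdorffGT (⨆ u ∈ S, t u) :=
  let ⟨_, ht', hconv⟩ := hS
  ht'.of_le (biSup_le_of_tendstoOne ht ht' hconv)

end BiSup

theorem stmt2_general {G : Type*} [Group G] (S : Set (ℕ → G))
    (t : (ℕ → G) → GroupTopology G) (ht : ∀ u ∈ S, IsTauS {u} (t u)) :
    (IsTsSet S ↔ IsHausdorffGT (⨆ u ∈ S, t u)) ∧
      (IsTsSet S → IsTauS S (⨆ u ∈ S, t u)) := by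
  have hconv := tendstoOne_biSup fun u hu => (ht u hu).2.1 u rfl
  refine ⟨⟨IsTsSet.isHausdorffGT_biSup ht, fun h => ⟨_, h, hconv⟩⟩, fun hS => ?_⟩
  exact ⟨hS.isHausdorffGT_biSup ht, hconv, fun _ => biSup_le_of_tendstoOne ht⟩

/-- Let `S` be a nonempty family of `T`-sequences in `G`, and for each `u ∈ S`
let `t u` be the finest Hausdorff group topology in which `u → 1` (i.e. `τ_u`).  Then `S` is a
`T_s`-set iff the infimum of the `τ_u` (in the lattice of group topologies, ordered by
inclusion of open sets; in Mathlib's order on `GroupTopology`, where finer = smaller, this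
infimum is `⨆ u ∈ S, t u`) is Hausdorff; and in that case this infimum is the finest Hausdorff
group topology in which every sequence of `S` converges to the identity. -/
theorem stmt2 {G : Type*} [Group G] (S : Set (ℕ → G)) (hS : S.Nonempty)
    (t : (ℕ → G) → GroupTopology G) (ht : ∀ u ∈ S, IsTauS {u} (t u)) :
    (IsTsSet S ↔ IsHausdorffGT (⨆ u ∈ S, t u)) ∧
      (IsTsSet S → IsTauS S (⨆ u ∈ S, t u)) :=
  stmt2_general S t ht
end

section
/- Let u = (u_n) be a T-sequence in a group G and let p : G → X be a group homomorphism into a topological group X. Then p is continuous with respect to τ_u (the finest Hausdorff group topology on G in which u_n → e) if and only if p(u_n) converges to the identity of X. -/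
open Filter Topology Pointwise

/-! Both conditions say that `τ_u` is finer than the group topology induced by `p` from `X`:
continuity directly, and convergence of `p ∘ u` because `τ_u` is finer than *every* group
topology `t` in which `u → 1`, Hausdorff or not — apply minimality to the Hausdorff topology
`τ_u ⊓ t`. -/

section

variable {G X : Type*} [Group G] [Group X] [TopologicalSpace X] [IsTopologicalGroup X]

def GroupTopology.induced (p : G →* X) : GroupTopology G :=
  ⟨TopologicalSpace.induced p ‹_›, topologicalGroup_induced p⟩

theorem GroupTopology.continuous_iff_le_induced (t : GroupTopology G) (p : G →* X) :
    Continuous[t.toTopologicalSpace, _] p ↔ t ≤ induced p := by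
  rw [_root_.continuous_iff_le_induced]
  exact toTopologicalSpace_le (x := t) (y := induced p)

theorem tendstoOne_induced_iff (p : G →* X) (u : ℕ → G) :
    TendstoOne (GroupTopology.induced p) u ↔ Tendsto (fun n => p (u n)) atTop (𝓝 1) := by
  rw [TendstoOne, GroupTopology.induced, nhds_induced, tendsto_comap_iff, map_one]
  rfl

theorem tendstoOne_inf_iff (t s : GroupTopology G) (u : ℕ → G) :
    TendstoOne (t ⊓ s) u ↔ TendstoOne t u ∧ TendstoOne s u := by
  rw [TendstoOne, GroupTopology.toTopologicalSpace_inf, nhds_inf, tendsto_inf]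
  rfl

theorem TendstoOne.mono {t s : GroupTopology G} {u : ℕ → G} (hts : t ≤ s)
    (hu : TendstoOne t u) : TendstoOne s u :=
  hu.mono_right (nhds_mono (GroupTopology.toTopologicalSpace_le.2 hts))

theorem IsTauS.le_iff {S : Set (ℕ → G)} {τ : GroupTopology G} (hτ : IsTauS S τ)
    (t : GroupTopology G) : τ ≤ t ↔ ∀ u ∈ S, TendstoOne t u := by
  obtain ⟨hT2, hS, hmin⟩ := hτ
  refine ⟨fun hle u hu => (hS u hu).mono hle, fun ht => ?_⟩
  have hT2' : IsHausdorffGT (τ ⊓ t) :=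
    t2Space_antitone (GroupTopology.toTopologicalSpace_le.2 inf_le_left) hT2
  have hS' : ∀ u ∈ S, TendstoOne (τ ⊓ t) u :=
    fun u hu => (tendstoOne_inf_iff τ t u).2 ⟨hS u hu, ht u hu⟩
  exact (hmin _ hT2' hS').trans inf_le_right

end

/-- for a `T`-sequence `u` in `G` with finest topology `τ_u`, a homomorphism
`p : G → X` into a topological group is `τ_u`-continuous iff `p (u n) → 1` in `X`. -/
theorem stmt3 {G X : Type*} [Group G] [Group X] [TopologicalSpace X] [IsTopologicalGroup X]
    (u : ℕ → G) (τu : GroupTopology G) (hτu : IsTauS {u} τu) (p : G →* X) :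
    @Continuous G X τu.toTopologicalSpace _ p ↔
      Filter.Tendsto (fun n => p (u n)) Filter.atTop (nhds (1 : X)) := by
  rw [GroupTopology.continuous_iff_le_induced, hτu.le_iff]
  simp only [Set.mem_singleton_iff, forall_eq, tendstoOne_induced_iff]
end

section
/- Let G be a group and S a T_s-set of sequences in G with finest topology τ_S. Let S(G, τ_S) denote the set of all sequences in G converging to the identity in τ_S. Then τ_S = τ_{S(G,τ_S)}, i.e., the finest Hausdorff group topology in which all sequences of S(G,τ_S) converge to the identity equals τ_S. -/
open Filter Topology Pointwise

/-- if `τ_S` is the finest Hausdorff group topology for a `T_s`-set `S`, and `τ'`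
is the finest Hausdorff group topology in which every sequence converging to the identity in
`τ_S` converges to the identity, then `τ' = τ_S`; i.e. `τ_S = τ_{S(G, τ_S)}`. -/
theorem stmt5 {G : Type*} [Group G] (S : Set (ℕ → G)) (τS : GroupTopology G)
    (hτS : IsTauS S τS) (τ' : GroupTopology G) (hτ' : IsTauS (SeqConvOne τS) τ') :
    τ' = τS := by
  have hτ'_le : τ' ≤ τS := hτ'.2.2 τS hτS.1 fun _ hu => hu
  have hS_tendsto : ∀ u ∈ S, TendstoOne τ' u := fun u hu => hτ'.2.1 u (hτS.2.1 u hu)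
  exact le_antisymm hτ'_le (hτS.2.2 τ' hτ'.1 hS_tendsto)
end

section
/- Let (G, τ) be a Hausdorff topological group and let S = S(G,τ) be the set of all sequences converging to the identity in τ. Then a set U is sequentially open in τ_S if and only if it is sequentially open in τ; i.e., the sequential modifications of τ_S and τ coincide. -/
open Filter Topology Pointwise

/-- `U` is sequentially open with respect to the topology `τ`: every sequence converging to a
point of `U` is eventually in `U`. -/
def SeqOpenIn {X : Type*} (τ : TopologicalSpace X) (U : Set X) : Prop :=
  ∀ (x : X) (u : ℕ → X), x ∈ U → Filter.Tendsto u Filter.atTop (@nhds X τ x) →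
    ∀ᶠ n in Filter.atTop, u n ∈ U

/-!
`τ_S` is finer than `τ` (as `τ` is one of the competing topologies), and every `τ`-null sequence
is `τ_S`-null by definition of `τ_S`; so the two group topologies have the same null sequences.
Translating by `x⁻¹`, they then have the same sequences converging to `x`, and sequential
openness depends only on those.
-/

theorem GroupTopology.tendsto_nhds_of_tendstoOne {G : Type*} [Group G] {t₁ t₂ : GroupTopology G}
    (h : ∀ u, TendstoOne t₁ u → TendstoOne t₂ u) {u : ℕ → G} {x : G}
    (hu : Tendsto u atTop (@nhds G t₁.toTopologicalSpace x)) :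
    Tendsto u atTop (@nhds G t₂.toTopologicalSpace x) :=
  have hdiv : TendstoOne t₁ (u · / x) :=
    (@tendsto_div_nhds_one_iff G _ t₁.toTopologicalSpace t₁.toIsTopologicalGroup _ _ _ _).mpr hu
  (@tendsto_div_nhds_one_iff G _ t₂.toTopologicalSpace t₂.toIsTopologicalGroup _ _ _ _).mp
    (h _ hdiv)

theorem GroupTopology.tendsto_nhds_iff_of_tendstoOne_iff {G : Type*} [Group G]
    {t₁ t₂ : GroupTopology G} (h : ∀ u, TendstoOne t₁ u ↔ TendstoOne t₂ u) (u : ℕ → G) (x : G) :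
    Tendsto u atTop (@nhds G t₁.toTopologicalSpace x) ↔
      Tendsto u atTop (@nhds G t₂.toTopologicalSpace x) :=
  ⟨tendsto_nhds_of_tendstoOne fun v => (h v).mp, tendsto_nhds_of_tendstoOne fun v => (h v).mpr⟩

theorem IsTauS.tendstoOne_iff {G : Type*} [Group G] {t τS : GroupTopology G}
    (hτS : IsTauS (SeqConvOne t) τS) (ht : IsHausdorffGT t) (u : ℕ → G) :
    TendstoOne τS u ↔ TendstoOne t u := by
  have hle : τS.toTopologicalSpace ≤ t.toTopologicalSpace := hτS.2.2 t ht fun _ hv => hv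
  exact ⟨fun hu => hu.mono_right (nhds_mono hle), hτS.2.1 u⟩

theorem seqOpenIn_congr {X : Type*} {t₁ t₂ : TopologicalSpace X}
    (h : ∀ (u : ℕ → X) (x : X), Tendsto u atTop (@nhds X t₁ x) ↔ Tendsto u atTop (@nhds X t₂ x))
    (U : Set X) : SeqOpenIn t₁ U ↔ SeqOpenIn t₂ U :=
  ⟨fun hU x u hx hu => hU x u hx ((h u x).mpr hu), fun hU x u hx hu => hU x u hx ((h u x).mp hu)⟩

/-- for a Hausdorff topological group `(G, τ)` with `S = S(G, τ)` the set of
all sequences converging to the identity and `τ_S` the finest Hausdorff group topology in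
which all of them converge to the identity, a set is sequentially open in `τ_S` iff it is
sequentially open in `τ`: the sequential modifications of `τ_S` and `τ` coincide. -/
theorem stmt12 {G : Type*} [Group G] [τ : TopologicalSpace G] [IsTopologicalGroup G] [T2Space G]
    (τS : GroupTopology G) (hτS : IsTauS (SeqConvOne (ambientGT G)) τS) :
    ∀ U : Set G, SeqOpenIn τS.toTopologicalSpace U ↔ SeqOpenIn τ U :=
  seqOpenIn_congr <| GroupTopology.tendsto_nhds_iff_of_tendstoOne_iff <|
    hτS.tendstoOne_iff (t := ambientGT G) ‹T2Space G›
end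

section
/- Let (G, τ) be a Hausdorff topological group with S = S(G,τ) the set of sequences converging to the identity. Then τ_S is the finest Hausdorff group topology on G all of whose open sets are sequentially open in τ. -/
open Filter Topology Pointwise

/-!
A topology `t` has only `τ`-sequentially open sets exactly when every `τ`-convergent sequence
converges to the same limit in `t`. For a group topology, translation reduces this to
sequences converging to the identity, i.e. to `S(G, τ)` being `t`-null. So the defining
properties of `τ_S` and of the topology in the theorem coincide.
-/

theorem forall_isOpen_seqOpenIn_iff {X : Type*} (τ t : TopologicalSpace X) :
    (∀ U : Set X, IsOpen[t] U → SeqOpenIn τ U) ↔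
      ∀ (x : X) (u : ℕ → X), Tendsto u atTop (@nhds X τ x) → Tendsto u atTop (@nhds X t x) := by
  constructor
  · intro h x u hu
    let := t
    exact tendsto_nhds.mpr fun U hU hx => h U hU x u hx hu
  · intro h U hU x u hx hu
    let := t
    exact h x u hu (hU.mem_nhds hx)

theorem GroupTopology.tendsto_nhds_of_tendsto_nhds_one {G : Type*} [Group G]
    [τ : TopologicalSpace G] [IsTopologicalGroup G] (t : GroupTopology G)
    (h : ∀ u ∈ SeqConvOne (ambientGT G), TendstoOne t u) (x : G) (u : ℕ → G)
    (hu : Tendsto u atTop (𝓝 x)) : Tendsto u atTop (@nhds G t.toTopologicalSpace x) := by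
  have hux : Tendsto (fun n => u n * x⁻¹) atTop (𝓝 1) := by
    simpa using hu.mul_const x⁻¹
  let := t.toTopologicalSpace
  have := t.toIsTopologicalGroup
  simpa using (h _ hux).mul_const x

theorem forall_isOpen_seqOpenIn_iff_tendstoOne {G : Type*} [Group G]
    [τ : TopologicalSpace G] [IsTopologicalGroup G] (t : GroupTopology G) :
    (∀ U : Set G, IsOpen[t.toTopologicalSpace] U → SeqOpenIn τ U) ↔
      ∀ u ∈ SeqConvOne (ambientGT G), TendstoOne t u := by
  rw [forall_isOpen_seqOpenIn_iff]
  exact ⟨fun h u hu => h 1 u hu, t.tendsto_nhds_of_tendsto_nhds_one⟩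

theorem stmt13_general {G : Type*} [Group G] [τ : TopologicalSpace G] [IsTopologicalGroup G]
    (τS : GroupTopology G) (hτS : IsTauS (SeqConvOne (ambientGT G)) τS) :
    IsHausdorffGT τS ∧
      (∀ U : Set G, @IsOpen G τS.toTopologicalSpace U → SeqOpenIn τ U) ∧
      ∀ t : GroupTopology G, IsHausdorffGT t →
        (∀ U : Set G, @IsOpen G t.toTopologicalSpace U → SeqOpenIn τ U) → τS ≤ t := by
  obtain ⟨hT2, hconv, hfinest⟩ := hτS
  simp only [forall_isOpen_seqOpenIn_iff_tendstoOne]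
  exact ⟨hT2, hconv, hfinest⟩

/-- for a Hausdorff topological group `(G, τ)` with `S = S(G, τ)`, the topology
`τ_S` is the finest Hausdorff group topology on `G` all of whose open sets are sequentially
open in `τ` (recall that in Mathlib's order on `GroupTopology`, finer = smaller). -/
theorem stmt13 {G : Type*} [Group G] [τ : TopologicalSpace G] [IsTopologicalGroup G] [T2Space G]
    (τS : GroupTopology G) (hτS : IsTauS (SeqConvOne (ambientGT G)) τS) :
    IsHausdorffGT τS ∧
      (∀ U : Set G, @IsOpen G τS.toTopologicalSpace U → SeqOpenIn τ U) ∧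
      ∀ t : GroupTopology G, IsHausdorffGT t →
        (∀ U : Set G, @IsOpen G t.toTopologicalSpace U → SeqOpenIn τ U) → τS ≤ t :=
  stmt13_general (τ := τ) τS hτS
end

section
/- Every non-discrete Hausdorff topological group without infinite compact subsets is neither an s-group nor a k-space, and its s-refinement (the topology τ_{S(G,τ)}) is the discrete topology. -/
open Filter Topology Pointwise

/-- `X` is a `k`-space: a set is closed whenever its intersection with every compact set is
compact. -/
def IsKSpace (X : Type*) [TopologicalSpace X] : Prop :=
  ∀ A : Set X, (∀ K : Set X, IsCompact K → IsCompact (A ∩ K)) → IsClosed A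

/-- a non-discrete Hausdorff topological group without infinite compact subsets
is neither an `s`-group nor a `k`-space, and its `s`-refinement `τ_{S(G,τ)}` is the discrete
topology. -/
theorem stmt14 {G : Type*} [Group G] [τ : TopologicalSpace G] [IsTopologicalGroup G] [T2Space G]
    (hnd : τ ≠ ⊥) (hK : ∀ K : Set G, IsCompact K → K.Finite) :
    ¬ IsSGroup G ∧ ¬ IsKSpace G ∧
      ∀ τ' : GroupTopology G, IsTauS (SeqConvOne (ambientGT G)) τ' →
        τ'.toTopologicalSpace = ⊥ := by
  -- Every convergent sequence is eventually constant.
  have key : ∀ u : ℕ → G, Filter.Tendsto u Filter.atTop (𝓝 1) → ∀ᶠ n in atTop, u n = 1 := by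
    intro u hu
    have hc : IsCompact (insert (1 : G) (Set.range u)) := hu.isCompact_insert_range
    have hF : ((insert (1 : G) (Set.range u)) \ {1}).Finite := (hK _ hc).diff
    have hcl : IsClosed ((insert (1 : G) (Set.range u)) \ {1}) := hF.isClosed
    have hmem : (1 : G) ∈ ((insert (1 : G) (Set.range u)) \ {1})ᶜ := by simp
    filter_upwards [hu.eventually (hcl.isOpen_compl.mem_nhds hmem)] with n hn
    by_contra h
    exact hn ⟨Set.mem_insert_of_mem _ ⟨n, rfl⟩, h⟩
  have hbot : (⊥ : GroupTopology G).toTopologicalSpace = ⊥ :=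
    GroupTopology.toTopologicalSpace_bot
  have hbotHaus : IsHausdorffGT (⊥ : GroupTopology G) := by
    unfold IsHausdorffGT
    rw [hbot]
    exact @DiscreteTopology.toT2Space G ⊥ (discreteTopology_bot G)
  have hbotTend : ∀ u : ℕ → G, (∀ᶠ n in atTop, u n = 1) →
      TendstoOne (⊥ : GroupTopology G) u := by
    intro u h
    unfold TendstoOne
    rw [hbot]
    have hn : @nhds G ⊥ 1 = pure 1 := by
      rw [@nhds_discrete G ⊥ (discreteTopology_bot G)]
    rw [hn]
    exact tendsto_pure.2 h
  refine ⟨?_, ?_, ?_⟩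
  · rintro ⟨S, hH, hS, hmin⟩
    have hle : ambientGT G ≤ ⊥ := hmin ⊥ hbotHaus fun u hu => hbotTend u (key u (hS u hu))
    have : (ambientGT G).toTopologicalSpace = ⊥ := by
      rw [le_bot_iff.1 hle, hbot]
    exact hnd this
  · intro hk
    have hall : ∀ A : Set G, IsClosed A := fun A =>
      hk A fun K hKc => (((hK K hKc).subset Set.inter_subset_right).isCompact)
    have : τ = ⊥ := by
      apply eq_bot_of_singletons_open
      intro x
      have := (hall ({x}ᶜ)).isOpen_compl
      rwa [compl_compl] at this
    exact hnd this
  · rintro τ' ⟨hH, hS, hmin⟩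
    have hle : τ' ≤ ⊥ := hmin ⊥ hbotHaus fun u hu => hbotTend u (key u hu)
    rw [le_bot_iff.1 hle, hbot]
end

section
/- Let (G, τ) be an s-group such that τ = τ_S for a finite T_s-set S of sequences. Then there exists a single T-sequence d in G with τ = τ_d. (Interleaving the finitely many sequences of S into one sequence d yields τ_d = τ_S.) -/
open Filter Topology Pointwise

/-! The interleaving `d` of finitely many sequences converges to a point in a given topology
exactly when each of them does. Hence `{d}` and `S` impose the same condition on a Hausdorff group
topology, and so have the same finest such topology. -/

def interleave {X : Type*} {q : ℕ} [NeZero q] (u : Fin q → ℕ → X) : ℕ → X :=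
  fun n => u (Fin.ofNat q n) (n / q)

lemma interleave_mul_add {X : Type*} {q : ℕ} [NeZero q] (u : Fin q → ℕ → X) (i : Fin q)
    (k : ℕ) : interleave u (q * k + i) = u i k := by
  have hi : Fin.ofNat q (q * k + i) = i := Fin.ext (by simp [Nat.mod_eq_of_lt])
  have hdiv : (q * k + i) / q = k := by
    rw [Nat.mul_add_div (Nat.pos_of_neZero q), Nat.div_eq_of_lt i.isLt, add_zero]
  rw [interleave, hi, hdiv]

lemma tendsto_interleave_iff {X : Type*} {q : ℕ} [NeZero q] (u : Fin q → ℕ → X)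
    {F : Filter X} : Tendsto (interleave u) atTop F ↔ ∀ i, Tendsto (u i) atTop F := by
  constructor
  · intro h i
    have hsub : Tendsto (fun k => q * k + (i : ℕ)) atTop atTop :=
      tendsto_atTop_mono (fun k => (Nat.le_mul_of_pos_left k (Nat.pos_of_neZero q)).trans
        (Nat.le_add_right _ _)) tendsto_id
    simpa only [Function.comp_def, interleave_mul_add] using h.comp hsub
  · intro h s hs
    have hall : ∀ᶠ k in atTop, ∀ i, u i k ∈ s := eventually_all.2 fun i => h i hs
    exact ((Nat.tendsto_div_const_atTop (NeZero.ne q)).eventually hall).mono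
      fun n hn => hn (Fin.ofNat q n)

lemma isTauS_congr {G : Type*} [Group G] {S S' : Set (ℕ → G)} {τ : GroupTopology G}
    (h : ∀ t : GroupTopology G, (∀ u ∈ S, TendstoOne t u) ↔ ∀ u ∈ S', TendstoOne t u) :
    IsTauS S τ ↔ IsTauS S' τ := by
  simp only [IsTauS, h]

/-- The constant sequence `x` is interleaved too, so that the family is nonempty even if
`S = ∅`. -/
lemma Set.Finite.exists_seq_tendsto_iff {X : Type*} {S : Set (ℕ → X)} (hS : S.Finite)
    (x : X) : ∃ d : ℕ → X, ∀ F : Filter X, pure x ≤ F →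
      (Tendsto d atTop F ↔ ∀ u ∈ S, Tendsto u atTop F) := by
  obtain ⟨q, f, hf⟩ := (hS.insert fun _ => x).fin_embedding
  have : NeZero q := ⟨by rintro rfl; simp only [Set.range_eq_empty] at hf; exact (Set.insert_nonempty _ _).ne_empty hf.symm⟩
  refine ⟨interleave f, fun F hxF => ?_⟩
  have hconst : Tendsto (fun _ : ℕ => x) atTop F := tendsto_const_pure.mono_right hxF
  rw [tendsto_interleave_iff, ← Set.forall_mem_range (p := fun u => Tendsto u atTop F), hf,
    Set.forall_mem_insert]
  exact and_iff_right hconst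

/-- if `τ = τ_S` for a finite `T_s`-set `S` of sequences in `G`, then there is a
single `T`-sequence `d` in `G` with `τ = τ_d` (interleaving the finitely many sequences). -/
theorem stmt15 {G : Type*} [Group G] (S : Set (ℕ → G)) (hS : S.Finite)
    (τ : GroupTopology G) (hτ : IsTauS S τ) :
    ∃ d : ℕ → G, IsTauS {d} τ := by
  obtain ⟨d, hd⟩ := hS.exists_seq_tendsto_iff (1 : G)
  have hconv : ∀ t : GroupTopology G, (∀ u ∈ ({d} : Set (ℕ → G)), TendstoOne t u) ↔
      ∀ u ∈ S, TendstoOne t u := fun t => by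
    simp only [Set.mem_singleton_iff, forall_eq]
    exact hd _ (@pure_le_nhds G t.toTopologicalSpace 1)
  exact ⟨d, (isTauS_congr hconv).2 hτ⟩
end

section
/- Let u = (u_n) be a T-sequence in a group G such that u generates G as a group. Let F be the free group on countably many generators e_1, e_2, …, equipped with the topology τ_e where e = (e_n) (the finest Hausdorff group topology on F in which e_n → identity). Then the homomorphism π : F → G determined by π(e_n) = u_n is a continuous surjective homomorphism from (F, τ_e) onto (G, τ_u), and (G, τ_u) is topologically isomorphic to the quotient group (F, τ_e)/ker π. -/
open Filter Topology Pointwise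

/-!
Minimality of `τ_s` holds against *every* group topology in which the sequences converge, not
only the Hausdorff ones: meeting such a topology with `τ_s` gives a Hausdorff one. Pulling `τ_u`
back along `π` therefore shows `τ_e ≤ π⁻¹ τ_u`, i.e. `π` is continuous. Conversely the quotient
topology of `τ_e` along the surjection `π` is a group topology in which `u = π ∘ e` converges,
so `τ_u` is finer than it.
-/

namespace IsTauS

variable {G : Type*} [Group G] {S : Set (ℕ → G)} {τ : GroupTopology G}

theorem le_of_forall_tendstoOne (hτ : IsTauS S τ) {t : GroupTopology G}
    (ht : ∀ u ∈ S, TendstoOne t u) : τ ≤ t := by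
  have hT2 : IsHausdorffGT (τ ⊓ t) :=
    t2Space_antitone (GroupTopology.toTopologicalSpace_le.2 inf_le_left) hτ.1
  have hconv : ∀ u ∈ S, TendstoOne (τ ⊓ t) u := fun u hu => by
    rw [TendstoOne, GroupTopology.toTopologicalSpace_inf, nhds_inf (t₁ := τ.toTopologicalSpace)]
    exact tendsto_inf.2 ⟨hτ.2.1 u hu, ht u hu⟩
  exact (hτ.2.2 _ hT2 hconv).trans inf_le_right

end IsTauS

section Transport

variable {G H : Type*} [Group G] [Group H]

def MonoidHom.inducedGroupTopology (f : G →* H) (t : GroupTopology H) : GroupTopology G :=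
  letI := t.toTopologicalSpace
  have := t.toIsTopologicalGroup
  ⟨t.toTopologicalSpace.induced f, topologicalGroup_induced f⟩

theorem MonoidHom.tendstoOne_inducedGroupTopology_iff (f : G →* H) (t : GroupTopology H)
    (v : ℕ → G) : TendstoOne (f.inducedGroupTopology t) v ↔ TendstoOne t (f ∘ v) := by
  let := t.toTopologicalSpace
  change Tendsto v atTop (@nhds G (this.induced f) 1) ↔ _
  rw [nhds_induced, tendsto_comap_iff, map_one]
  rfl

theorem isTopologicalGroup_coinduced_of_surjective [t : TopologicalSpace G]
    [IsTopologicalGroup G] {f : G →* H} (hf : Function.Surjective f) :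
    @IsTopologicalGroup H (t.coinduced f) _ := by
  let e := QuotientGroup.quotientKerEquivOfSurjective f hf
  -- `f` is the quotient map followed by `e`; coinducing along `e` is inducing along `e⁻¹`
  have : t.coinduced f =
      (inferInstance : TopologicalSpace (G ⧸ f.ker)).induced e.toEquiv.symm := by
    rw [e.toEquiv.induced_symm]
    exact coinduced_compose.symm
  rw [this]
  exact topologicalGroup_induced (e.symm : H →* G ⧸ f.ker)

def MonoidHom.coinducedGroupTopology (f : G →* H) (hf : Function.Surjective f)
    (t : GroupTopology G) : GroupTopology H :=
  letI := t.toTopologicalSpace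
  have := t.toIsTopologicalGroup
  ⟨t.toTopologicalSpace.coinduced f, isTopologicalGroup_coinduced_of_surjective hf⟩

theorem TendstoOne.map {t : GroupTopology G} {t' : GroupTopology H} {v : ℕ → G} (f : G →* H)
    (hf : @Continuous G H t.toTopologicalSpace t'.toTopologicalSpace f) (hv : TendstoOne t v) :
    TendstoOne t' (f ∘ v) := by
  rw [TendstoOne, ← map_one f]
  exact (@Continuous.tendsto _ _ t.toTopologicalSpace t'.toTopologicalSpace _ hf 1).comp hv

end Transport

/-- let `u` be a `T`-sequence generating a group `G`, with finest topology
`τ_u`, and let `τ_e` be the finest Hausdorff group topology on the free group `F = FreeGroup ℕ`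
in which the sequence of generators `e n = FreeGroup.of n` converges to the identity.  Then
the homomorphism `π = FreeGroup.lift u : F → G` (so `π (e n) = u n`) is a continuous
surjection from `(F, τ_e)` onto `(G, τ_u)`, and `τ_u` is the quotient topology, i.e.
`(G, τ_u)` is topologically isomorphic to `(F, τ_e) ⧸ ker π`. -/
theorem stmt17 {G : Type*} [Group G] (u : ℕ → G)
    (hgen : Subgroup.closure (Set.range u) = ⊤)
    (τu : GroupTopology G) (hτu : IsTauS {u} τu)
    (τe : GroupTopology (FreeGroup ℕ))
    (hτe : IsTauS {fun n => FreeGroup.of n} τe) :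
    Function.Surjective (FreeGroup.lift u : FreeGroup ℕ →* G) ∧
      @Continuous (FreeGroup ℕ) G τe.toTopologicalSpace τu.toTopologicalSpace
        (FreeGroup.lift u) ∧
      τu.toTopologicalSpace =
        TopologicalSpace.coinduced (FreeGroup.lift u) τe.toTopologicalSpace := by
  set π : FreeGroup ℕ →* G := FreeGroup.lift u
  have hπe : π ∘ (fun n => FreeGroup.of n) = u := funext fun _ => FreeGroup.lift_apply_of
  have hsurj : Function.Surjective π := by
    rw [← MonoidHom.range_eq_top, FreeGroup.range_lift_eq_closure, hgen]
  have hcont : @Continuous _ _ τe.toTopologicalSpace τu.toTopologicalSpace π := by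
    rw [continuous_iff_le_induced]
    refine GroupTopology.toTopologicalSpace_le.2 (hτe.le_of_forall_tendstoOne
      (t := π.inducedGroupTopology τu) ?_)
    rintro _ rfl
    rw [π.tendstoOne_inducedGroupTopology_iff, hπe]
    exact hτu.2.1 u rfl
  refine ⟨hsurj, hcont, le_antisymm ?_ (continuous_iff_coinduced_le.1 hcont)⟩
  refine GroupTopology.toTopologicalSpace_le.2
    (hτu.le_of_forall_tendstoOne (t := π.coinducedGroupTopology hsurj τe) ?_)
  rintro _ rfl
  rw [← hπe]
  exact TendstoOne.map π continuous_coinduced_rng (hτe.2.1 _ rfl)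
end
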